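/- arXiv:2003.13677 — 10 statements merged into one kernel-verified Lean document; each statement's English description precedes it below -/
import Mathlib

section
/- Let R be an F-pure Noetherian ring of prime characteristic p, and let 𝔞, J be ideals with 𝔞 ⊆ √J. Define ν_𝔞^J(p^e) = max { m ∈ ℕ : 𝔞^m ⊄ J^{[p^e]} }. Then the sequence ( ν_𝔞^J(p^e)/p^e )_{e ≥ 0} is non-decreasing, i.e., p · ν_𝔞^J(p^e) ≤ ν_𝔞^J(p^{e+1}) for all e. -/
open Filter

section Defs
variable (p : ℕ) {R : Type*} [CommRing R]

/-- A `p^{-e}`-linear (Cartier) operator on `R`: under the identification of `R^{1/p^e}`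
with `R` (sending `f^{1/p^e}` to `f`), these are exactly the `R`-linear maps
`R^{1/p^e} → R`. -/
def IsCartier (e : ℕ) (φ : R →+ R) : Prop :=
  ∀ a x : R, φ (a ^ p ^ e * x) = a * φ x

/-- `R` is `F`-pure: the inclusion `R ⊆ R^{1/p^e}` splits as a map of `R`-modules,
equivalently there is a Cartier operator sending `1` to `1`. -/
def FPure (R : Type*) [CommRing R] : Prop :=
  ∀ e : ℕ, ∃ φ : R →+ R, IsCartier p e φ ∧ φ 1 = 1

/-- `R` is `F`-finite: `R^{1/p^e}` is a finitely generated `R`-module, i.e. `R` is a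
finitely generated module over its subring of `p^e`-th powers. -/
def FFinite (R : Type*) [CommRing R] : Prop :=
  ∀ e : ℕ, ∃ s : Finset R, ∀ x : R, ∃ c : R → R, x = ∑ y ∈ s, c y ^ p ^ e * y

/-- The Frobenius power `J^{[q]}`, generated by the `q`-th powers of elements of `J`. -/
def frobeniusPower (J : Ideal R) (q : ℕ) : Ideal R :=
  Ideal.span ((fun f => f ^ q) '' (J : Set R))

/-- The Cartier contraction `J_e = { f | φ(f^{1/p^e}) ∈ J for all φ ∈ Hom_R(R^{1/p^e}, R) }`. -/
def cartierContraction (e : ℕ) (J : Ideal R) : Ideal R where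
  carrier := { f | ∀ φ : R →+ R, IsCartier p e φ → φ f ∈ J }
  add_mem' := fun ha hb φ hφ => by
    rw [map_add]; exact J.add_mem (ha φ hφ) (hb φ hφ)
  zero_mem' := fun φ hφ => by rw [map_zero]; exact J.zero_mem
  smul_mem' := by
    intro c f hf φ hφ
    have h : IsCartier p e (φ.comp (AddMonoidHom.mulLeft c)) := by
      intro a x
      simp only [AddMonoidHom.coe_comp, Function.comp_apply, AddMonoidHom.coe_mulLeft]
      rw [mul_left_comm]
      exact hφ a (c * x)
    simpa using hf _ h

/-- The Cartier core `𝒫(J) = ⋂ₛ Jₛ`. -/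
def cartierCore (J : Ideal R) : Ideal R := ⨅ s : ℕ, cartierContraction p s J

/-- `J` is uniformly `F`-compatible: `φ(J^{1/p^e}) ⊆ J` for all `e > 0` and all
`φ ∈ Hom_R(R^{1/p^e}, R)`. -/
def UniformlyFCompatible (J : Ideal R) : Prop :=
  ∀ e : ℕ, 0 < e → ∀ φ : R →+ R, IsCartier p e φ → ∀ f ∈ J, φ f ∈ J

/-- `ν_𝔞^J(q) = max { m | 𝔞^m ⊄ J^{[q]} }`. -/
noncomputable def nuNum (𝔞 J : Ideal R) (q : ℕ) : ℕ :=
  sSup { m : ℕ | ¬ 𝔞 ^ m ≤ frobeniusPower J q }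

/-- `b_𝔞^J(p^e) = max { t | 𝔞^t ⊄ J_e }`. -/
noncomputable def bNum (𝔞 J : Ideal R) (e : ℕ) : ℕ :=
  sSup { t : ℕ | ¬ 𝔞 ^ t ≤ cartierContraction p e J }

/-- `μ(𝔞)`, the minimal number of generators of `𝔞`. -/
noncomputable def muGen (𝔞 : Ideal R) : ℕ :=
  sInf { k : ℕ | ∃ s : Finset R, s.card = k ∧ Ideal.span (s : Set R) = 𝔞 }

end Defs

section Aux

variable {R : Type*} [CommRing R]

lemma frobeniusPower_mono {J K : Ideal R} (h : J ≤ K) (q : ℕ) :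
    frobeniusPower J q ≤ frobeniusPower K q :=
  Ideal.span_mono (Set.image_mono h)

lemma pow_mem_frobeniusPower {J : Ideal R} {f : R} (hf : f ∈ J) (q : ℕ) :
    f ^ q ∈ frobeniusPower J q :=
  Ideal.subset_span ⟨f, hf, rfl⟩

/-- pigeonhole: `(span s)^(card s * q + 1) ≤ (span s)^{[q]}` -/
lemma span_pow_le_frobeniusPower (q : ℕ) (s : Finset R) :
    (Ideal.span (s : Set R)) ^ (s.card * q + 1) ≤ frobeniusPower (Ideal.span (s : Set R)) q := by
  classical
  induction s using Finset.induction with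
  | empty => simp [Ideal.span_empty]
  | @insert a t ha ih =>
    rw [Finset.card_insert_of_notMem ha]
    have hspan : (Ideal.span (↑(insert a t) : Set R)) =
        Ideal.span {a} ⊔ Ideal.span (t : Set R) := by
      rw [Finset.coe_insert, Set.insert_eq, Ideal.span_union]
    rw [hspan]
    have h1 : (t.card + 1) * q + 1 = q + (t.card * q + 1) := by ring
    rw [h1]
    refine Ideal.sup_pow_add_le_pow_sup_pow.trans (sup_le ?_ ?_)
    · rw [Ideal.span_singleton_pow]
      rw [Ideal.span_singleton_le_iff_mem]
      refine pow_mem_frobeniusPower ?_ q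
      exact Ideal.mem_sup_left (Ideal.mem_span_singleton_self a)
    · refine ih.trans (frobeniusPower_mono ?_ q)
      exact le_sup_right

lemma exists_pow_le_frobeniusPower [IsNoetherianRing R] {𝔞 J : Ideal R}
    (h𝔞 : 𝔞 ≤ J.radical) (q : ℕ) :
    ∃ M, 𝔞 ^ M ≤ frobeniusPower J q := by
  obtain ⟨n, hn⟩ := Ideal.exists_pow_le_of_le_radical_of_fg h𝔞
    (IsNoetherian.noetherian 𝔞)
  obtain ⟨s, hs⟩ := (IsNoetherian.noetherian J : J.FG)
  refine ⟨n * (s.card * q + 1), ?_⟩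
  rw [pow_mul]
  calc (𝔞 ^ n) ^ (s.card * q + 1) ≤ J ^ (s.card * q + 1) := Ideal.pow_right_mono hn _
    _ ≤ frobeniusPower J q := by
        rw [← hs]; exact span_pow_le_frobeniusPower q s

lemma bddAbove_nu_set [IsNoetherianRing R] {𝔞 J : Ideal R}
    (h𝔞 : 𝔞 ≤ J.radical) (q : ℕ) :
    BddAbove { m : ℕ | ¬ 𝔞 ^ m ≤ frobeniusPower J q } := by
  obtain ⟨M, hM⟩ := exists_pow_le_frobeniusPower h𝔞 q
  refine ⟨M, fun m hm => ?_⟩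
  by_contra h
  exact hm ((Ideal.pow_le_pow_right (le_of_not_ge h)).trans hM)

lemma frobeniusPower_mul_le {J : Ideal R} (q r : ℕ) :
    frobeniusPower J (q * r) ≤ frobeniusPower (frobeniusPower J q) r := by
  rw [frobeniusPower, Ideal.span_le]
  rintro _ ⟨f, hf, rfl⟩
  show f ^ (q * r) ∈ _
  rw [pow_mul]
  exact pow_mem_frobeniusPower (pow_mem_frobeniusPower hf q) r

lemma cartier_maps_frobeniusPower (p : ℕ) {I : Ideal R} {z : R} (s : ℕ)
    (hz : z ∈ frobeniusPower I (p ^ s)) {φ : R →+ R} (hφ : IsCartier p s φ) :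
    φ z ∈ I := by
  induction hz using Submodule.span_induction generalizing φ with
  | mem x hx =>
    obtain ⟨a, ha, rfl⟩ := hx
    have := hφ a 1
    rw [mul_one] at this
    rw [this]
    exact I.mul_mem_right _ ha
  | zero => rw [map_zero]; exact I.zero_mem
  | add x y _ _ hx hy => rw [map_add]; exact I.add_mem (hx hφ) (hy hφ)
  | smul c x _ hx =>
    have h : IsCartier p s (φ.comp (AddMonoidHom.mulLeft c)) := by
      intro a y
      simp only [AddMonoidHom.coe_comp, Function.comp_apply, AddMonoidHom.coe_mulLeft]
      rw [mul_left_comm]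
      exact hφ a (c * y)
    simpa using hx h

lemma fpure_descend {p : ℕ} (hFP : FPure p R) {I : Ideal R} {x : R}
    (hx : x ^ p ∈ frobeniusPower I (p ^ 1)) : x ∈ I := by
  obtain ⟨φ, hφ, hφ1⟩ := hFP 1
  have h := hφ x 1
  rw [mul_one, pow_one, hφ1, mul_one] at h
  rw [← h]
  exact cartier_maps_frobeniusPower p 1 hx hφ

end Aux


/-- In an `F`-pure Noetherian ring of prime characteristic `p`, for ideals
`𝔞 ⊆ √J` the sequence `ν_𝔞^J(p^e)/p^e` is non-decreasing:
`p · ν_𝔞^J(p^e) ≤ ν_𝔞^J(p^{e+1})`. -/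
theorem nu_div_pow_monotone {R : Type*} [CommRing R] [IsNoetherianRing R]
    (p : ℕ) (hp : p.Prime) [CharP R p] (hFP : FPure p R)
    (𝔞 J : Ideal R) (h𝔞 : 𝔞 ≤ J.radical) (e : ℕ) :
    p * nuNum 𝔞 J (p ^ e) ≤ nuNum 𝔞 J (p ^ (e + 1)) := by
  set S : Set ℕ := { m : ℕ | ¬ 𝔞 ^ m ≤ frobeniusPower J (p ^ e) } with hS
  set T : Set ℕ := { m : ℕ | ¬ 𝔞 ^ m ≤ frobeniusPower J (p ^ (e + 1)) } with hT
  have key : ∀ m ∈ S, p * m ∈ T := by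
    intro m hm
    intro hcon
    apply hm
    intro x hx
    have hxp : x ^ p ∈ 𝔞 ^ (p * m) := by
      rw [mul_comm, pow_mul]
      exact Ideal.pow_mem_pow hx p
    have hxp2 : x ^ p ∈ frobeniusPower (frobeniusPower J (p ^ e)) (p ^ 1) := by
      refine frobeniusPower_mul_le (p ^ e) (p ^ 1) ?_
      rw [← pow_add]
      exact hcon hxp
    exact fpure_descend hFP hxp2
  rcases Set.eq_empty_or_nonempty S with h | h
  · simp [nuNum, ← hS, h, csSup_empty]
  · have hmem : sSup S ∈ S := Nat.sSup_mem h (bddAbove_nu_set h𝔞 (p ^ e))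
    exact le_csSup (bddAbove_nu_set h𝔞 (p ^ (e + 1))) (key _ hmem)
end

section
/- Let R be an F-finite F-pure ring of prime characteristic p and 𝔮 a prime ideal of R. Then for every e ∈ ℕ, the Cartier contraction 𝔮_e = { f ∈ R : φ(f^{1/p^e}) ∈ 𝔮 for all φ ∈ Hom_R(R^{1/p^e}, R) } is a 𝔮-primary ideal, i.e., √(𝔮_e) = 𝔮 and 𝔮_e is primary. -/
open Filter

lemma cartier_comp_mulLeft {R : Type*} [CommRing R] (p e : ℕ) {φ : R →+ R}
    (hφ : IsCartier p e φ) (c : R) :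
    IsCartier p e (φ.comp (AddMonoidHom.mulLeft c)) := by
  intro a x
  simp only [AddMonoidHom.coe_comp, Function.comp_apply, AddMonoidHom.coe_mulLeft]
  rw [mul_left_comm]
  exact hφ a (c * x)

lemma mem_cartierContraction {R : Type*} [CommRing R] (p e : ℕ) (J : Ideal R) (f : R) :
    f ∈ cartierContraction p e J ↔ ∀ φ : R →+ R, IsCartier p e φ → φ f ∈ J := Iff.rfl

/-- For a prime ideal `𝔮` of an `F`-finite `F`-pure ring of prime
characteristic `p`, the Cartier contraction `𝔮_e` is a `𝔮`-primary ideal. -/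
theorem cartierContraction_isPrimary {R : Type*} [CommRing R]
    (p : ℕ) (hp : p.Prime) [CharP R p] (hFF : FFinite p R) (hFP : FPure p R)
    (𝔮 : Ideal R) (h𝔮 : 𝔮.IsPrime) (e : ℕ) :
    (cartierContraction p e 𝔮).radical = 𝔮 ∧ (cartierContraction p e 𝔮).IsPrimary:= by
  have hq1 : (1 : ℕ) ≤ p ^ e := Nat.one_le_pow _ _ hp.pos
  -- 𝔮_e ⊆ 𝔮
  have hsub : cartierContraction p e 𝔮 ≤ 𝔮 := by
    intro f hf
    obtain ⟨φ, hφ, hφ1⟩ := hFP e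
    have hψ := cartier_comp_mulLeft p e hφ (f ^ (p ^ e - 1))
    have := (mem_cartierContraction p e 𝔮 f).mp hf _ hψ
    simp only [AddMonoidHom.coe_comp, Function.comp_apply, AddMonoidHom.coe_mulLeft] at this
    have hpow : f ^ (p ^ e - 1) * f = f ^ p ^ e * 1 := by
      rw [mul_one, ← pow_succ, Nat.sub_add_cancel hq1]
    rw [hpow, hφ f 1, hφ1, mul_one] at this
    exact this
  -- f ∈ 𝔮 → f ^ p ^ e ∈ 𝔮_e
  have hpowmem : ∀ f ∈ 𝔮, f ^ p ^ e ∈ cartierContraction p e 𝔮 := by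
    intro f hf φ hφ
    have : φ (f ^ p ^ e) = f * φ 1 := by rw [← hφ f 1, mul_one]
    rw [this]
    exact Ideal.mul_mem_right _ _ hf
  have hrad : (cartierContraction p e 𝔮).radical = 𝔮 := by
    apply le_antisymm
    · calc (cartierContraction p e 𝔮).radical ≤ 𝔮.radical := Ideal.radical_mono hsub
        _ = 𝔮 := h𝔮.radical
    · intro f hf
      exact ⟨p ^ e, hpowmem f hf⟩
  refine ⟨hrad, ?_, ?_⟩
  · intro h
    exact h𝔮.ne_top (top_le_iff.mp (h ▸ hsub))
  · intro a b hab
    rw [smul_eq_mul] at hab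
    by_cases ha : a ∈ 𝔮
    · right
      refine ⟨p ^ e, ?_⟩
      rintro x ⟨y, -, rfl⟩
      show a ^ p ^ e * y ∈ cartierContraction p e 𝔮
      rw [mul_comm]
      exact Ideal.mul_mem_left _ _ (hpowmem a ha)
    · left
      intro φ hφ
      have hψ := cartier_comp_mulLeft p e hφ (a ^ (p ^ e - 1))
      have := (mem_cartierContraction p e 𝔮 _).mp hab _ hψ
      simp only [AddMonoidHom.coe_comp, Function.comp_apply, AddMonoidHom.coe_mulLeft] at this
      have hpow : a ^ (p ^ e - 1) * (a * b) = a ^ p ^ e * b := by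
        rw [← mul_assoc, ← pow_succ, Nat.sub_add_cancel hq1]
      rw [hpow, hφ a b] at this
      exact (h𝔮.mem_or_mem this).resolve_left ha
end

section
/- Let R be an F-finite F-pure ring of prime characteristic p and J ⊆ R an ideal. Then J_e = J for every nonnegative integer e if and only if J is uniformly F-compatible, i.e., φ(J^{1/p^e}) ⊆ J for every e > 0 and every φ ∈ Hom_R(R^{1/p^e}, R). -/
open Filter

/-- `J_e = J` for every `e` iff `J` is uniformly `F`-compatible. -/
theorem cartierContraction_eq_self_iff_uniformlyFCompatible {R : Type*} [CommRing R]
    (p : ℕ) (hp : p.Prime) [CharP R p] (hFF : FFinite p R) (hFP : FPure p R)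
    (J : Ideal R) :
    (∀ e : ℕ, cartierContraction p e J = J) ↔ UniformlyFCompatible p J := by
  -- Key: for every e, J_e ⊆ J, using F-purity.
  have hsub : ∀ e : ℕ, cartierContraction p e J ≤ J := by
    intro e f hf
    obtain ⟨φ, hφ, hφ1⟩ := hFP e
    -- ψ x = φ (f^{p^e - 1} * x) is Cartier and ψ f = f
    have hψ : IsCartier p e (φ.comp (AddMonoidHom.mulLeft (f ^ (p ^ e - 1)))) := by
      intro a x
      simp only [AddMonoidHom.coe_comp, Function.comp_apply, AddMonoidHom.coe_mulLeft]
      rw [mul_left_comm]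
      exact hφ a _
    have := hf _ hψ
    simp only [AddMonoidHom.coe_comp, Function.comp_apply, AddMonoidHom.coe_mulLeft] at this
    have hpe : 1 ≤ p ^ e := Nat.one_le_pow _ _ hp.pos
    have hfe : f ^ (p ^ e - 1) * f = f ^ p ^ e := by
      rw [← pow_succ, Nat.sub_add_cancel hpe]
    rw [hfe] at this
    have : φ (f ^ p ^ e * 1) ∈ J := by rwa [mul_one]
    rwa [hφ f 1, hφ1, mul_one] at this
  constructor
  · intro h e _ φ hφ f hf
    rw [← h e] at hf
    exact hf φ hφ
  · intro h e
    refine le_antisymm (hsub e) ?_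
    intro f hf φ hφ
    rcases Nat.eq_zero_or_pos e with he | he
    · subst he
      have : φ (f ^ p ^ 0 * 1) = f * φ 1 := hφ f 1
      simp only [pow_zero, pow_one, mul_one] at this
      rw [this]
      exact J.mul_mem_right _ hf
    · exact h e he φ hφ f hf
end

section
/- Let R be an F-finite F-pure ring of prime characteristic p and J ⊆ R an ideal. Then the ideal 𝒫(J) = ⋂_{s ∈ ℕ} J_s is uniformly F-compatible, i.e., φ(𝒫(J)^{1/p^e}) ⊆ 𝒫(J) for every e > 0 and every φ ∈ Hom_R(R^{1/p^e}, R). -/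
open Filter

/-- The Cartier core `𝒫(J) = ⋂ₛ Jₛ` is uniformly `F`-compatible. -/
theorem cartierCore_uniformlyFCompatible {R : Type*} [CommRing R]
    (p : ℕ) (hp : p.Prime) [CharP R p] (hFF : FFinite p R) (hFP : FPure p R)
    (J : Ideal R) :
    UniformlyFCompatible p (cartierCore p J) := by
  intro e _ φ hφ f hf
  rw [cartierCore, Ideal.mem_iInf] at hf ⊢
  intro s ψ hψ
  have hcomp : IsCartier p (s + e) (ψ.comp φ) := by
    intro a x
    simp only [AddMonoidHom.coe_comp, Function.comp_apply]
    rw [pow_add, pow_mul, hφ, hψ]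
  exact hf (s + e) (ψ.comp φ) hcomp
end

section
/- Let R be an F-finite F-pure ring of prime characteristic p and J ⊆ R an ideal. Then the Cartier core 𝒫(J) = ⋂_{s ∈ ℕ} J_s is a radical ideal. -/
/-! An `F`-splitting `ψ` of order `e` sends `x ^ p ^ e` back to `x`, and composing it with a
Cartier operator of order `s` gives one of order `s + e`. Hence `x ^ p ^ e ∈ J_{s+e}` forces
`x ∈ J_s`. If `x ^ n` lies in every `J_s`, then so does its multiple `x ^ p ^ n`, and therefore
so does `x`. -/

open Filter

section

variable {p : ℕ} {R : Type*} [CommRing R]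

theorem IsCartier.comp {s e : ℕ} {φ ψ : R →+ R} (hφ : IsCartier p s φ) (hψ : IsCartier p e ψ) :
    IsCartier p (s + e) (φ.comp ψ) := by
  intro a x
  rw [AddMonoidHom.comp_apply, pow_add, pow_mul, hψ, hφ, AddMonoidHom.comp_apply]

theorem IsCartier.apply_pow_of_map_one {e : ℕ} {ψ : R →+ R} (hψ : IsCartier p e ψ)
    (hψ1 : ψ 1 = 1) (x : R) : ψ (x ^ p ^ e) = x := by
  simpa only [mul_one, hψ1] using hψ x 1

theorem IsCartier.map_mem_cartierContraction {s e : ℕ} {ψ : R →+ R} (hψ : IsCartier p e ψ)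
    {J : Ideal R} {f : R} (hf : f ∈ cartierContraction p (s + e) J) :
    ψ f ∈ cartierContraction p s J :=
  fun _ hφ => hf _ (hφ.comp hψ)

theorem mem_cartierContraction_of_pow_mem (hFP : FPure p R) {s e : ℕ} {J : Ideal R} {x : R}
    (hx : x ^ p ^ e ∈ cartierContraction p (s + e) J) : x ∈ cartierContraction p s J := by
  obtain ⟨ψ, hψ, hψ1⟩ := hFP e
  simpa only [hψ.apply_pow_of_map_one hψ1] using hψ.map_mem_cartierContraction hx

end

theorem cartierCore_isRadical_general {R : Type*} [CommRing R]
    (p : ℕ) (hp : p.Prime) (hFP : FPure p R)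
    (J : Ideal R) :
    (cartierCore p J).IsRadical := by
  rintro x ⟨n, hn⟩
  rw [cartierCore, Ideal.mem_iInf] at hn ⊢
  intro s
  apply mem_cartierContraction_of_pow_mem hFP (e := n)
  exact Ideal.pow_mem_of_pow_mem _ (hn (s + n)) (Nat.lt_pow_self hp.one_lt).le

/-- The Cartier core `𝒫(J) = ⋂ₛ Jₛ` is a radical ideal. -/
theorem cartierCore_isRadical {R : Type*} [CommRing R]
    (p : ℕ) (hp : p.Prime) [CharP R p] (hFF : FFinite p R) (hFP : FPure p R)
    (J : Ideal R) :
    (cartierCore p J).IsRadical :=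
  cartierCore_isRadical_general p hp hFP J
end

section
/- Let R be an F-finite F-pure ring of prime characteristic p and J ⊆ R an ideal. Then 𝒫(J) = ⋂_{s ∈ ℕ} J_s is the largest uniformly F-compatible ideal contained in J: any uniformly F-compatible ideal I with I ⊆ J satisfies I ⊆ 𝒫(J). -/
open Filter

/-- The Cartier core `𝒫(J)` is the largest uniformly `F`-compatible
ideal contained in `J`. -/
theorem le_cartierCore_of_uniformlyFCompatible {R : Type*} [CommRing R]
    (p : ℕ) (hp : p.Prime) [CharP R p] (hFF : FFinite p R) (hFP : FPure p R)
    (J : Ideal R) :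
    ∀ I : Ideal R, UniformlyFCompatible p I → I ≤ J → I ≤ cartierCore p J := by
  intro I hI hIJ f hf
  simp only [cartierCore, Ideal.mem_iInf]
  intro s
  intro φ hφ
  rcases Nat.eq_zero_or_pos s with hs | hs
  · subst hs
    have h := hφ f 1
    simp only [pow_zero, pow_one, mul_one] at h
    rw [h]
    exact Ideal.mul_mem_right _ _ (hIJ hf)
  · exact hIJ (hI s hs φ hφ f hf)
end

section
/- Let R be an F-finite F-pure ring of prime characteristic p and J ⊆ R an ideal. Then J_e^{[p]} ⊆ J_{e+1} for every e ∈ ℕ, where J_e is the Cartier contraction of J at level e. -/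
open Filter

/-- `J_e^{[p]} ⊆ J_{e+1}` for every `e`. -/
theorem frobeniusPower_cartierContraction_le_succ {R : Type*} [CommRing R]
    (p : ℕ) (hp : p.Prime) [CharP R p] (hFF : FFinite p R) (hFP : FPure p R)
    (J : Ideal R) (e : ℕ) :
    frobeniusPower (cartierContraction p e J) p ≤ cartierContraction p (e + 1) J := by
  rw [frobeniusPower, Ideal.span_le]
  rintro _ ⟨f, hf, rfl⟩
  intro φ hφ
  haveI : Fact p.Prime := ⟨hp⟩
  have hfrob : ∀ x y : R, (x + y) ^ p = x ^ p + y ^ p := fun x y => add_pow_char x y p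
  let ψ : R →+ R :=
    { toFun := fun x => φ (x ^ p)
      map_zero' := by simp [zero_pow hp.ne_zero]
      map_add' := fun x y => by
        show φ ((x + y) ^ p) = φ (x ^ p) + φ (y ^ p)
        rw [hfrob, map_add] }
  have hψ : IsCartier p e ψ := by
    intro a x
    show φ ((a ^ p ^ e * x) ^ p) = a * φ (x ^ p)
    rw [mul_pow, ← pow_mul, ← pow_succ]
    exact hφ a (x ^ p)
  exact hf ψ hψ
end

section
/- Let S = K[x_1,...,x_n] with K an F-finite field of characteristic p, I a squarefree monomial ideal, R = S/I, and J ⊆ R a monomial ideal (image of a monomial ideal of S). Then for every e ∈ ℕ the Cartier contraction J_e ⊆ R is a monomial ideal, and consequently the Cartier core 𝒫(J) = ⋂_s J_s is a monomial ideal. -/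
open Filter

open MvPolynomial

/-- `I` is a squarefree monomial ideal of `K[x₁,…,xₙ]`: it is generated by squarefree
monomials `x^N = ∏_{i ∈ N} xᵢ`. -/
def IsSquarefreeMonomialIdeal {K : Type*} [Field K] {n : ℕ}
    (I : Ideal (MvPolynomial (Fin n) K)) : Prop :=
  ∃ A : Set (Finset (Fin n)),
    I = Ideal.span ((fun N => monomial (∑ i ∈ N, Finsupp.single i 1) (1 : K)) '' A)

/-- An ideal of the Stanley–Reisner ring `R = S ⧸ I` is a monomial ideal when it is
generated by images of monomials of `S`. -/
def IsMonomialQuotIdeal {K : Type*} [Field K] {n : ℕ}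
    (I : Ideal (MvPolynomial (Fin n) K)) (J : Ideal (MvPolynomial (Fin n) K ⧸ I)) : Prop :=
  ∃ B : Set (Fin n →₀ ℕ),
    J = Ideal.span ((fun a => Ideal.Quotient.mk I (monomial a (1 : K))) '' B)

/-!
Since `I` is a monomial ideal, `R = S ⧸ I` inherits the `ℕⁿ`-grading of `S`, with projections
`x ↦ x_c` onto the degree-`c` parts. Fix a `p^{-e}`-linear map `φ`, put `q = p^e`, and fix degrees
`a₀, c₀`. Sending the degree-`a` part of `x` to the degree-`c` part of `φ(x_a)`, where
`q c - a = q c₀ - a₀`, defines another `p^{-e}`-linear map `ψ`: it is the homogeneous component of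
`φ` of degree `c₀ - a₀/q` for the `(1/q)ℤⁿ`-grading of `Hom_R(R^{1/q}, R)`. Moreover
`ψ(f)_{c₀} = φ(f_{a₀})_{c₀}`. So if `f ∈ J_e` and `J` is graded, then `φ(f_{a₀})_{c₀} ∈ J` for every
`c₀`, hence `φ(f_{a₀}) ∈ J`; that is, `J_e` is again graded, i.e. monomial, and so is the
intersection `𝒫(J)` of all the `J_e`.
-/

namespace Ideal.Quotient

variable {A B : Type*} [CommRing A] [AddCommGroup B]

def liftAddMonoidHom (I : Ideal A) (f : A →+ B) (hf : ∀ a ∈ I, f a = 0) : A ⧸ I →+ B :=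
  QuotientAddGroup.lift I.toAddSubgroup f hf

@[simp]
theorem liftAddMonoidHom_mk (I : Ideal A) (f : A →+ B) (hf : ∀ a ∈ I, f a = 0) (a : A) :
    liftAddMonoidHom I f hf (mk I a) = f a :=
  rfl

end Ideal.Quotient

namespace MvPolynomial

variable {σ K : Type*} [CommRing K]

section MonomialLift

variable {B : Type*} [AddCommGroup B]

noncomputable def monomialLift (f : (σ →₀ ℕ) → K →+ B) : MvPolynomial σ K →+ B :=
  (Finsupp.liftAddHom f).comp AddMonoidAlgebra.coeffAddEquiv.toAddMonoidHom

theorem monomialLift_apply (f : (σ →₀ ℕ) → K →+ B) (g : MvPolynomial σ K) :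
    monomialLift f g = ∑ a ∈ g.support, f a (coeff a g) :=
  sum_def

theorem monomialLift_monomial (f : (σ →₀ ℕ) → K →+ B) (a : σ →₀ ℕ) (l : K) :
    monomialLift f (monomial a l) = f a l := by
  classical
  simp [monomialLift, monomial]

end MonomialLift

def HasMonomialComponents (I : Ideal (MvPolynomial σ K)) : Prop :=
  ∀ g ∈ I, ∀ c, monomial c (coeff c g) ∈ I

theorem hasMonomialComponents_span_monomial (T : Set (σ →₀ ℕ)) :
    HasMonomialComponents (Ideal.span ((fun s => monomial s (1 : K)) '' T)) := by
  intro g hg c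
  rw [mem_ideal_span_monomial_image] at hg ⊢
  intro a ha
  obtain rfl := Finset.mem_singleton.mp (support_monomial_subset ha)
  refine hg a (mem_support_iff.mpr fun h0 => ?_)
  simp [h0] at ha

section QuotientComponent

variable (I : Ideal (MvPolynomial σ K)) (hI : HasMonomialComponents I)

noncomputable def quotientComponent (c : σ →₀ ℕ) :
    MvPolynomial σ K ⧸ I →+ MvPolynomial σ K ⧸ I :=
  Ideal.Quotient.liftAddMonoidHom I
    ((Ideal.Quotient.mk I).toAddMonoidHom.comp
      ((monomial c).toAddMonoidHom.comp (coeffAddMonoidHom c)))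
    fun g hg => Ideal.Quotient.eq_zero_iff_mem.mpr (hI g hg c)

theorem quotientComponent_mk (c : σ →₀ ℕ) (g : MvPolynomial σ K) :
    quotientComponent I hI c (Ideal.Quotient.mk I g) =
      Ideal.Quotient.mk I (monomial c (coeff c g)) :=
  rfl

theorem quotientComponent_monomial_mul (b c : σ →₀ ℕ) (μ : K) (x : MvPolynomial σ K ⧸ I) :
    quotientComponent I hI (b + c) (Ideal.Quotient.mk I (monomial b μ) * x) =
      Ideal.Quotient.mk I (monomial b μ) * quotientComponent I hI c x := by
  obtain ⟨g, rfl⟩ := Ideal.Quotient.mk_surjective x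
  rw [← map_mul, quotientComponent_mk, quotientComponent_mk, ← map_mul, coeff_monomial_mul,
    monomial_mul]

theorem quotientComponent_monomial_mul_of_not_le {b c : σ →₀ ℕ} (hbc : ¬b ≤ c) (μ : K)
    (x : MvPolynomial σ K ⧸ I) :
    quotientComponent I hI c (Ideal.Quotient.mk I (monomial b μ) * x) = 0 := by
  classical
  obtain ⟨g, rfl⟩ := Ideal.Quotient.mk_surjective x
  rw [← map_mul, quotientComponent_mk, coeff_monomial_mul', if_neg hbc, monomial_zero, map_zero]

theorem quotientComponent_quotientComponent [DecidableEq σ] (c c' : σ →₀ ℕ) (x : MvPolynomial σ K ⧸ I) :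
    quotientComponent I hI c' (quotientComponent I hI c x) =
      if c = c' then quotientComponent I hI c x else 0 := by
  obtain ⟨g, rfl⟩ := Ideal.Quotient.mk_surjective x
  rw [quotientComponent_mk, quotientComponent_mk, coeff_monomial]
  split_ifs with h
  · rw [h]
  · rw [monomial_zero, map_zero]

theorem mem_of_forall_quotientComponent_mem {J : Ideal (MvPolynomial σ K ⧸ I)}
    {x : MvPolynomial σ K ⧸ I} (h : ∀ c, quotientComponent I hI c x ∈ J) : x ∈ J := by
  obtain ⟨g, rfl⟩ := Ideal.Quotient.mk_surjective x
  rw [← support_sum_monomial_coeff g, map_sum]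
  exact J.sum_mem fun c _ => h c

def IsComponentClosed (J : Ideal (MvPolynomial σ K ⧸ I)) : Prop :=
  ∀ c, ∀ x ∈ J, quotientComponent I hI c x ∈ J

theorem isComponentClosed_map {J₀ : Ideal (MvPolynomial σ K)} (hJ₀ : HasMonomialComponents J₀) :
    IsComponentClosed I hI (J₀.map (Ideal.Quotient.mk I)) := by
  intro c x hx
  obtain ⟨g, hg, rfl⟩ :=
    (Ideal.mem_map_iff_of_surjective _ Ideal.Quotient.mk_surjective).mp hx
  exact Ideal.mem_map_of_mem _ (hJ₀ g hg c)

end QuotientComponent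

section HomogeneousPart

variable {I : Ideal (MvPolynomial σ K)} (hI : HasMonomialComponents I)
  (q : ℕ) (a₀ c₀ : σ →₀ ℕ) (φ : MvPolynomial σ K ⧸ I →+ MvPolynomial σ K ⧸ I)

open Classical in
noncomputable def shiftComponent (a : σ →₀ ℕ) : MvPolynomial σ K ⧸ I →+ MvPolynomial σ K ⧸ I :=
  if h : ∃ c, a + q • c₀ = a₀ + q • c then (quotientComponent I hI h.choose).comp φ else 0

variable {q a₀ c₀}

theorem shiftComponent_of_eq (hq : q ≠ 0) {a c : σ →₀ ℕ} (h : a + q • c₀ = a₀ + q • c) :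
    shiftComponent hI q a₀ c₀ φ a = (quotientComponent I hI c).comp φ := by
  have hex : ∃ c, a + q • c₀ = a₀ + q • c := ⟨c, h⟩
  have hc : hex.choose = c :=
    nsmul_right_injective hq (add_left_cancel (hex.choose_spec.symm.trans h))
  rw [shiftComponent, dif_pos hex, hc]

theorem shiftComponent_of_not_exists {a : σ →₀ ℕ} (h : ¬∃ c, a + q • c₀ = a₀ + q • c) :
    shiftComponent hI q a₀ c₀ φ a = 0 :=
  dif_neg h

theorem quotientComponent_shiftComponent [DecidableEq σ] (hq : q ≠ 0) (a : σ →₀ ℕ) (x : MvPolynomial σ K ⧸ I) :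
    quotientComponent I hI c₀ (shiftComponent hI q a₀ c₀ φ a x) =
      if a = a₀ then quotientComponent I hI c₀ (φ x) else 0 := by
  by_cases h : ∃ c, a + q • c₀ = a₀ + q • c
  · obtain ⟨c, hc⟩ := h
    have hca : c = c₀ ↔ a = a₀ := by
      constructor
      · rintro rfl; exact add_right_cancel hc
      · rintro rfl; exact (nsmul_right_injective hq (add_left_cancel hc)).symm
    rw [shiftComponent_of_eq hI φ hq hc, AddMonoidHom.comp_apply,
      quotientComponent_quotientComponent]
    by_cases ha : a = a₀
    · rw [if_pos (hca.mpr ha), if_pos ha, hca.mpr ha]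
    · rw [if_neg (mt hca.mp ha), if_neg ha]
  · have ha : a ≠ a₀ := by
      rintro rfl
      exact h ⟨c₀, rfl⟩
    rw [shiftComponent_of_not_exists hI φ h, if_neg ha, AddMonoidHom.zero_apply, map_zero]

theorem shiftComponent_monomial_pow_mul {p e : ℕ} (hq : p ^ e ≠ 0) (hφ : IsCartier p e φ)
    (a b : σ →₀ ℕ) (μ : K) (x : MvPolynomial σ K ⧸ I) :
    shiftComponent hI (p ^ e) a₀ c₀ φ (p ^ e • b + a)
        (Ideal.Quotient.mk I (monomial b μ) ^ p ^ e * x) =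
      Ideal.Quotient.mk I (monomial b μ) * shiftComponent hI (p ^ e) a₀ c₀ φ a x := by
  by_cases h : ∃ c, a + p ^ e • c₀ = a₀ + p ^ e • c
  · obtain ⟨c, hc⟩ := h
    have hbc : p ^ e • b + a + p ^ e • c₀ = a₀ + p ^ e • (b + c) := by
      rw [add_assoc, hc, smul_add]; abel
    rw [shiftComponent_of_eq hI φ hq hc, shiftComponent_of_eq hI φ hq hbc,
      AddMonoidHom.comp_apply, AddMonoidHom.comp_apply, hφ, quotientComponent_monomial_mul]
  · rw [shiftComponent_of_not_exists hI φ h, AddMonoidHom.zero_apply, mul_zero]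
    by_cases h' : ∃ c', p ^ e • b + a + p ^ e • c₀ = a₀ + p ^ e • c'
    · obtain ⟨c', hc'⟩ := h'
      -- degree `c'` of `x^b φ(x)` is zero unless `b ≤ c'`, and then `c' - b` would witness `h`
      have hbc' : ¬b ≤ c' := fun hle => h ⟨c' - b, add_left_cancel (a := p ^ e • b) <| by
        rw [← add_assoc, hc', ← add_tsub_cancel_of_le hle, smul_add, add_tsub_cancel_left]
        abel⟩
      rw [shiftComponent_of_eq hI φ hq hc', AddMonoidHom.comp_apply, hφ,
        quotientComponent_monomial_mul_of_not_le I hI hbc']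
    · rw [shiftComponent_of_not_exists hI φ h', AddMonoidHom.zero_apply]

variable (q a₀ c₀)

/-- The homogeneous component of `φ` of degree `c₀ - a₀ / q`. -/
noncomputable def homogeneousPart : MvPolynomial σ K ⧸ I →+ MvPolynomial σ K ⧸ I :=
  Ideal.Quotient.liftAddMonoidHom I
    (monomialLift fun a => (shiftComponent hI q a₀ c₀ φ a).comp
      ((Ideal.Quotient.mk I).toAddMonoidHom.comp (monomial a).toAddMonoidHom))
    fun g hg => by
      rw [monomialLift_apply]
      refine Finset.sum_eq_zero fun a _ => ?_
      simp [Ideal.Quotient.eq_zero_iff_mem.mpr (hI g hg a)]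

variable {q a₀ c₀}

theorem homogeneousPart_mk_monomial (a : σ →₀ ℕ) (l : K) :
    homogeneousPart hI q a₀ c₀ φ (Ideal.Quotient.mk I (monomial a l)) =
      shiftComponent hI q a₀ c₀ φ a (Ideal.Quotient.mk I (monomial a l)) := by
  rw [homogeneousPart, Ideal.Quotient.liftAddMonoidHom_mk, monomialLift_monomial]
  rfl

theorem quotientComponent_homogeneousPart (hq : q ≠ 0) (x : MvPolynomial σ K ⧸ I) :
    quotientComponent I hI c₀ (homogeneousPart hI q a₀ c₀ φ x) =
      quotientComponent I hI c₀ (φ (quotientComponent I hI a₀ x)) := by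
  classical
  obtain ⟨g, rfl⟩ := Ideal.Quotient.mk_surjective x
  rw [homogeneousPart, Ideal.Quotient.liftAddMonoidHom_mk, monomialLift_apply, map_sum]
  simp only [AddMonoidHom.comp_apply, RingHom.toAddMonoidHom_eq_coe, AddMonoidHom.coe_coe,
    quotientComponent_shiftComponent hI φ hq, Finset.sum_ite_eq', quotientComponent_mk]
  split_ifs with ha
  · rfl
  · rw [notMem_support_iff.mp ha, monomial_zero, map_zero, map_zero, map_zero]

theorem isCartier_homogeneousPart {p e : ℕ} (hp : p.Prime) [CharP K p] (hφ : IsCartier p e φ) :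
    IsCartier p e (homogeneousPart hI (p ^ e) a₀ c₀ φ) := by
  have := Fact.mk hp
  have hq : p ^ e ≠ 0 := pow_ne_zero e hp.ne_zero
  intro u x
  obtain ⟨v, rfl⟩ := Ideal.Quotient.mk_surjective u
  obtain ⟨g, rfl⟩ := Ideal.Quotient.mk_surjective x
  rw [← map_pow, ← map_mul]
  induction v using MvPolynomial.induction_on' with
  | add v w ihv ihw => rw [add_pow_char_pow, add_mul, map_add, map_add, ihv, ihw, map_add, add_mul]
  | monomial b μ =>
    induction g using MvPolynomial.induction_on' with
    | add g₁ g₂ ih₁ ih₂ => rw [mul_add, map_add, map_add, ih₁, ih₂, map_add, map_add, mul_add]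
    | monomial a l =>
      have hmul : monomial b μ ^ p ^ e * monomial a l = monomial (p ^ e • b + a) (μ ^ p ^ e * l) :=
        by rw [monomial_pow, monomial_mul]
      rw [hmul, homogeneousPart_mk_monomial, homogeneousPart_mk_monomial, ← hmul, map_mul,
        map_pow, shiftComponent_monomial_pow_mul hI φ hq hφ]

end HomogeneousPart

section CartierContraction

variable {I : Ideal (MvPolynomial σ K)} (hI : HasMonomialComponents I) {p : ℕ} (hp : p.Prime)
  [CharP K p] {J : Ideal (MvPolynomial σ K ⧸ I)} (hJ : IsComponentClosed I hI J)
include hp hJ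

theorem quotientComponent_mem_cartierContraction {e : ℕ} {x : MvPolynomial σ K ⧸ I}
    (hx : x ∈ cartierContraction p e J) (a₀ : σ →₀ ℕ) :
    quotientComponent I hI a₀ x ∈ cartierContraction p e J := by
  intro φ hφ
  refine mem_of_forall_quotientComponent_mem I hI fun c₀ => ?_
  rw [← quotientComponent_homogeneousPart hI φ (pow_ne_zero e hp.ne_zero)]
  exact hJ c₀ _ (hx _ (isCartier_homogeneousPart hI φ hp hφ))

theorem isComponentClosed_cartierContraction (e : ℕ) :
    IsComponentClosed I hI (cartierContraction p e J) :=
  fun a₀ _ hx => quotientComponent_mem_cartierContraction hI hp hJ hx a₀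

theorem isComponentClosed_cartierCore : IsComponentClosed I hI (cartierCore p J) := by
  intro a₀ x hx
  simp only [cartierCore, Submodule.mem_iInf] at hx ⊢
  exact fun e => quotientComponent_mem_cartierContraction hI hp hJ (hx e) a₀

end CartierContraction

end MvPolynomial

section StanleyReisner

variable {K : Type*} [Field K] {n : ℕ}

theorem IsSquarefreeMonomialIdeal.hasMonomialComponents {I : Ideal (MvPolynomial (Fin n) K)}
    (hI : IsSquarefreeMonomialIdeal I) : HasMonomialComponents I := by
  obtain ⟨A, rfl⟩ := hI
  simpa only [Set.image_image] using
    hasMonomialComponents_span_monomial (K := K) ((fun N => ∑ i ∈ N, Finsupp.single i 1) '' A)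

theorem IsMonomialQuotIdeal.isComponentClosed {I : Ideal (MvPolynomial (Fin n) K)}
    (hI : HasMonomialComponents I) {J : Ideal (MvPolynomial (Fin n) K ⧸ I)}
    (hJ : IsMonomialQuotIdeal I J) : IsComponentClosed I hI J := by
  obtain ⟨B, rfl⟩ := hJ
  have h := isComponentClosed_map I hI (hasMonomialComponents_span_monomial (K := K) B)
  rwa [Ideal.map_span, Set.image_image] at h

theorem isMonomialQuotIdeal_of_isComponentClosed {I : Ideal (MvPolynomial (Fin n) K)}
    {hI : HasMonomialComponents I} {J : Ideal (MvPolynomial (Fin n) K ⧸ I)}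
    (hJ : IsComponentClosed I hI J) : IsMonomialQuotIdeal I J := by
  refine ⟨{a | Ideal.Quotient.mk I (monomial a 1) ∈ J}, le_antisymm ?_ ?_⟩
  · intro x hx
    refine mem_of_forall_quotientComponent_mem I hI fun a => ?_
    obtain ⟨g, rfl⟩ := Ideal.Quotient.mk_surjective x
    have hsplit : ∀ l : K, Ideal.Quotient.mk I (monomial a l) =
        Ideal.Quotient.mk I (C l) * Ideal.Quotient.mk I (monomial a 1) := by
      intro l; rw [← map_mul, C_mul_monomial, mul_one]
    have hcomp := hJ a _ hx
    rw [quotientComponent_mk] at hcomp ⊢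
    by_cases h0 : coeff a g = 0
    · rw [h0, monomial_zero, map_zero]; exact Ideal.zero_mem _
    · have hgen : Ideal.Quotient.mk I (monomial a 1) ∈ J := by
        simpa [hsplit (coeff a g), ← mul_assoc, ← map_mul, h0] using
          J.mul_mem_left (Ideal.Quotient.mk I (C (coeff a g)⁻¹)) hcomp
      rw [hsplit]
      exact Ideal.mul_mem_left _ _ (Ideal.subset_span ⟨a, hgen, rfl⟩)
  · rw [Ideal.span_le]
    rintro _ ⟨a, ha, rfl⟩
    exact ha

end StanleyReisner

theorem cartierContraction_isMonomial_general {K : Type*} [Field K] {n : ℕ}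
    (p : ℕ) (hp : p.Prime) [CharP K p]
    (I : Ideal (MvPolynomial (Fin n) K)) (hI : IsSquarefreeMonomialIdeal I)
    (J : Ideal (MvPolynomial (Fin n) K ⧸ I)) (hJ : IsMonomialQuotIdeal I J) (e : ℕ) :
    IsMonomialQuotIdeal I (cartierContraction p e J) ∧
      IsMonomialQuotIdeal I (cartierCore p J) := by
  have hI' := hI.hasMonomialComponents
  have hJ' := hJ.isComponentClosed hI'
  exact ⟨isMonomialQuotIdeal_of_isComponentClosed
      (isComponentClosed_cartierContraction hI' hp hJ' e),
    isMonomialQuotIdeal_of_isComponentClosed (isComponentClosed_cartierCore hI' hp hJ')⟩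

/-- In a Stanley–Reisner ring `R = S/I` over an `F`-finite field of
characteristic `p`, for every monomial ideal `J` of `R` and every `e`, the Cartier
contraction `J_e` is a monomial ideal, and consequently the Cartier core `𝒫(J)` is a
monomial ideal. -/
theorem cartierContraction_isMonomial {K : Type*} [Field K] {n : ℕ}
    (p : ℕ) (hp : p.Prime) [CharP K p] (hK : FFinite p K)
    (I : Ideal (MvPolynomial (Fin n) K)) (hI : IsSquarefreeMonomialIdeal I)
    (J : Ideal (MvPolynomial (Fin n) K ⧸ I)) (hJ : IsMonomialQuotIdeal I J) (e : ℕ) :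
    IsMonomialQuotIdeal I (cartierContraction p e J) ∧
      IsMonomialQuotIdeal I (cartierCore p J) :=
  cartierContraction_isMonomial_general p hp I hI J hJ e
end

section
/- Let S = K[x_1,...,x_n] with K an F-finite field of characteristic p, I a squarefree monomial ideal, R = S/I, and 𝔮 a monomial prime ideal of R. Then for every e ∈ ℕ and q = p^e, the Cartier contraction satisfies 𝔮_e = 𝔮^{[q]} + 𝒫(𝔮), where 𝒫(𝔮) = ⋂_s 𝔮_s is the Cartier core of 𝔮. -/
open Filter

open MvPolynomial

/-! Let `W` be the set of variables outside `𝔮`; primality makes `W` a face, and `𝔮` is spanned by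
`I` and the variables off `W`.

If `x^c` is a face monomial with `W ⊆ supp c` and `x^c x^a ∈ I`, then `x^a` lies in every `𝔮_s`:
for a Cartier map `ψ`, `x^c ψ(x^a) = ψ(x^{p^s c} x^a) = 0`, and the annihilator of such an `x^c`
lies in `𝔮`.

Conversely, let `f ∈ 𝔮_e` have a monomial `x^a` in neither `𝔮^{[q]}` nor the span of those
monomials. Write `a = u + q b` with `u < q`; as `a_i < q` off `W`, `b` is supported on `W`. With a
Cartier map `φ` on `K` sending the coefficient of `x^a` to `1`, the map
`c x^{u + q b'} ↦ φ(c) x^{b' + W}` is Cartier on `S` and preserves `I` because of the choice of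
`a`, so it descends to `R`. It sends `f` outside `𝔮`: the coefficient of the face monomial
`x^{b + W}` becomes `1`. -/

theorem IsCartier.mulLeft_comp {R : Type*} [CommRing R] {p e : ℕ} {φ : R →+ R}
    (hφ : IsCartier p e φ) (c : R) : IsCartier p e ((AddMonoidHom.mulLeft c).comp φ) := by
  intro a x
  simp only [AddMonoidHom.coe_comp, Function.comp_apply, AddMonoidHom.coe_mulLeft, hφ a x]
  ring

theorem IsCartier.exists_quotient {R : Type*} [CommRing R] {p e : ℕ} {Φ : R →+ R}
    (hΦ : IsCartier p e Φ) {I : Ideal R} (hI : ∀ f ∈ I, Φ f ∈ I) :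
    ∃ ψ : R ⧸ I →+ R ⧸ I, IsCartier p e ψ ∧
      ∀ f, ψ (Ideal.Quotient.mk I f) = Ideal.Quotient.mk I (Φ f) := by
  let ψ : R ⧸ I →+ R ⧸ I := QuotientAddGroup.map I.toAddSubgroup I.toAddSubgroup Φ hI
  have hψ : ∀ f, ψ (Ideal.Quotient.mk I f) = Ideal.Quotient.mk I (Φ f) := fun _ => rfl
  refine ⟨ψ, fun a x => ?_, hψ⟩
  obtain ⟨a, rfl⟩ := Ideal.Quotient.mk_surjective a
  obtain ⟨x, rfl⟩ := Ideal.Quotient.mk_surjective x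
  rw [← map_pow, ← map_mul, hψ, hψ, hΦ, map_mul]

/-- `K` is a vector space over its subfield of `p^e`-th powers; compose a functional that is `1`
at `z` with the inverse of `c ↦ c^{p^e}`. -/
theorem IsCartier.exists_eq_one {K : Type*} [Field K] (p e : ℕ) [ExpChar K p] {z : K}
    (hz : z ≠ 0) : ∃ φ : K →+ K, IsCartier p e φ ∧ φ z = 1 := by
  let ι := (iterateFrobenius K p e).rangeRestrictFieldEquiv
  obtain ⟨ℓ, hℓ⟩ := Module.Projective.exists_dual_eq_one (iterateFrobenius K p e).fieldRange hz
  refine ⟨ι.symm.toAddMonoidHom.comp ℓ.toAddMonoidHom, fun a x => ?_, by simp [hℓ]⟩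
  have hax : a ^ p ^ e * x = ι a • x := by simp [ι, Subfield.smul_def, iterateFrobenius_def]
  simp [hax]

theorem frobeniusPower_le_cartierContraction {R : Type*} [CommRing R] (p e : ℕ) (J : Ideal R) :
    frobeniusPower J (p ^ e) ≤ cartierContraction p e J := by
  rw [frobeniusPower, Ideal.span_le]
  rintro _ ⟨g, hg, rfl⟩ φ hφ
  have hφg := hφ g 1
  rw [mul_one] at hφg
  exact hφg ▸ J.mul_mem_right (φ 1) hg

namespace Finsupp

variable {σ : Type*}

theorem sum_single_one_apply [DecidableEq σ] (N : Finset σ) (j : σ) :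
    (∑ i ∈ N, single i 1 : σ →₀ ℕ) j = if j ∈ N then 1 else 0 := by
  simp [finsetSum_apply, single_apply]

theorem support_sum_single_one (N : Finset σ) : (∑ i ∈ N, single i 1 : σ →₀ ℕ).support = N := by
  classical
  ext j
  simp [sum_single_one_apply]

theorem exists_eq_add_smul (a : σ →₀ ℕ) {q : ℕ} (hq : 0 < q) :
    ∃ u b : σ →₀ ℕ, a = u + q • b ∧ (∀ i, u i < q) ∧ ∀ i, a i < q → b i = 0 :=
  ⟨mapRange (· % q) (Nat.zero_mod q) a, mapRange (· / q) (Nat.zero_div q) a,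
    by ext i; simp [Nat.mod_add_div], fun i => by simpa using Nat.mod_lt _ hq,
    fun i hi => by simpa using Nat.div_eq_of_lt hi⟩

theorem smul_le_add_smul_iff {q : ℕ} {u m b : σ →₀ ℕ} (hu : ∀ i, u i < q) :
    q • m ≤ u + q • b ↔ m ≤ b := by
  simp only [le_def, add_apply, smul_apply, smul_eq_mul]
  refine forall_congr' fun i => ?_
  have hq : 0 < q := (Nat.zero_le _).trans_lt (hu i)
  rw [mul_comm, ← Nat.le_div_iff_mul_le hq, Nat.add_mul_div_left _ _ hq, Nat.div_eq_of_lt (hu i),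
    zero_add]

theorem add_smul_sub_smul {q : ℕ} {u m b : σ →₀ ℕ} (h : m ≤ b) :
    u + q • b - q • m = u + q • (b - m) := by
  ext i
  have := Nat.mul_le_mul_left q (h i)
  simp only [tsub_apply, add_apply, smul_apply, smul_eq_mul, Nat.mul_sub]
  omega

end Finsupp

namespace MvPolynomial

variable {σ K : Type*} [CommRing K]

variable (K) in
noncomputable def monomialIdeal (s : Set (σ →₀ ℕ)) : Ideal (MvPolynomial σ K) :=
  Ideal.span ((fun a => monomial a 1) '' s)

theorem monomial_mem_monomialIdeal {s : Set (σ →₀ ℕ)} {a : σ →₀ ℕ} (ha : a ∈ s) :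
    monomial a (1 : K) ∈ monomialIdeal K s :=
  Ideal.subset_span ⟨a, ha, rfl⟩

theorem mem_monomialIdeal_of_forall {s : Set (σ →₀ ℕ)} {f : MvPolynomial σ K}
    (h : ∀ a ∈ f.support, a ∈ s) : f ∈ monomialIdeal K s :=
  mem_ideal_span_monomial_image.2 fun a ha => ⟨a, h a ha, le_rfl⟩

theorem mem_of_mem_monomialIdeal {s : Set (σ →₀ ℕ)} (hs : IsUpperSet s) {f : MvPolynomial σ K}
    (hf : f ∈ monomialIdeal K s) {a : σ →₀ ℕ} (ha : a ∈ f.support) : a ∈ s :=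
  have ⟨_, hb, hba⟩ := mem_ideal_span_monomial_image.1 hf a ha
  hs hba hb

theorem monomialIdeal_union (s t : Set (σ →₀ ℕ)) :
    monomialIdeal K (s ∪ t) = monomialIdeal K s ⊔ monomialIdeal K t := by
  rw [monomialIdeal, Set.image_union, Ideal.span_union]
  rfl

theorem add_mem_of_mul_monomial_mem {s : Set (σ →₀ ℕ)} (hs : IsUpperSet s)
    {f : MvPolynomial σ K} {c : σ →₀ ℕ} (hf : f * monomial c 1 ∈ monomialIdeal K s)
    {b : σ →₀ ℕ} (hb : b ∈ f.support) : b + c ∈ s :=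
  mem_of_mem_monomialIdeal hs hf <| by
    rwa [mem_support_iff, coeff_mul_monomial, mul_one, ← mem_support_iff]

/-- The map `c x^{u + q b} ↦ φ(c) x^b`, killing the monomials whose exponent is not of this form. -/
noncomputable def digitPart (u : σ →₀ ℕ) {q : ℕ} (hq : q ≠ 0) (φ : K →+ K) :
    MvPolynomial σ K →+ MvPolynomial σ K :=
  AddMonoidAlgebra.coeffAddEquiv.symm.toAddMonoidHom.comp <|
    (Finsupp.mapRange.addMonoidHom φ).comp <|
    (Finsupp.comapDomain.addMonoidHom
      ((add_right_injective u).comp (smul_right_injective _ hq))).comp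
    AddMonoidAlgebra.coeffAddEquiv.toAddMonoidHom

theorem coeff_digitPart (u : σ →₀ ℕ) {q : ℕ} (hq : q ≠ 0) (φ : K →+ K) (f : MvPolynomial σ K)
    (b : σ →₀ ℕ) : coeff b (digitPart u hq φ f) = φ (coeff (u + q • b) f) := rfl

theorem isCartier_digitPart {p e : ℕ} [ExpChar K p] {u : σ →₀ ℕ} (hu : ∀ i, u i < p ^ e)
    (hq : p ^ e ≠ 0) {φ : K →+ K} (hφ : IsCartier p e φ) : IsCartier p e (digitPart u hq φ) := by
  intro f g
  induction f using MvPolynomial.induction_on' with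
  | monomial m c =>
    ext b
    rw [monomial_pow, coeff_digitPart, coeff_monomial_mul', coeff_monomial_mul']
    by_cases hmb : m ≤ b
    · rw [if_pos ((Finsupp.smul_le_add_smul_iff hu).2 hmb), if_pos hmb,
        Finsupp.add_smul_sub_smul hmb, hφ, coeff_digitPart]
    · rw [if_neg (mt (Finsupp.smul_le_add_smul_iff hu).1 hmb), if_neg hmb, map_zero]
  | add f₁ f₂ h₁ h₂ => rw [add_pow_expChar_pow, add_mul, map_add, h₁, h₂, add_mul]

theorem monomial_mul_digitPart_mem {s : Set (σ →₀ ℕ)} (hs : IsUpperSet s) {u t : σ →₀ ℕ} {q : ℕ}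
    (hq : q ≠ 0) (φ : K →+ K) (hut : ∀ b, u + q • b ∈ s → b + t ∈ s) {f : MvPolynomial σ K}
    (hf : f ∈ monomialIdeal K s) : monomial t 1 * digitPart u hq φ f ∈ monomialIdeal K s := by
  refine mem_monomialIdeal_of_forall fun c hc => ?_
  rw [mem_support_iff, coeff_monomial_mul'] at hc
  split_ifs at hc with htc
  · rw [one_mul, coeff_digitPart] at hc
    have hcf : u + q • (c - t) ∈ f.support := mem_support_iff.2 fun h0 => hc (by rw [h0, map_zero])
    simpa only [tsub_add_cancel_of_le htc] using hut _ (mem_of_mem_monomialIdeal hs hf hcf)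
  · exact absurd rfl hc

end MvPolynomial
namespace StanleyReisner

variable {σ : Type*}

def IsSupportUpperSet (T : Set (σ →₀ ℕ)) : Prop :=
  ∀ ⦃a b : σ →₀ ℕ⦄, a ∈ T → a.support ⊆ b.support → b ∈ T

theorem IsSupportUpperSet.isUpperSet {T : Set (σ →₀ ℕ)} (hT : IsSupportUpperSet T) :
    IsUpperSet T :=
  fun _ _ hab ha => hT ha (Finsupp.support_mono hab)

/- For `T` the exponents of `I` and `W` the variables outside `𝔮`: the exponents of `𝔮`, of
`𝔮^{[q]}`, and of the part of `𝒫(𝔮)` that is needed (monomials killing a face monomial `x^c` with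
`W ⊆ supp c`). -/
def primeExps (T : Set (σ →₀ ℕ)) (W : Finset σ) : Set (σ →₀ ℕ) :=
  T ∪ {a | ¬ a.support ⊆ W}

def frobeniusExps (T : Set (σ →₀ ℕ)) (W : Finset σ) (q : ℕ) : Set (σ →₀ ℕ) :=
  T ∪ {a | ∃ i ∉ W, q ≤ a i}

def coreExps (T : Set (σ →₀ ℕ)) (W : Finset σ) : Set (σ →₀ ℕ) :=
  {a | ∃ c : σ →₀ ℕ, W ⊆ c.support ∧ c ∉ T ∧ c + a ∈ T}

variable {T : Set (σ →₀ ℕ)} {W : Finset σ}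

theorem IsSupportUpperSet.isUpperSet_primeExps (hT : IsSupportUpperSet T) :
    IsUpperSet (primeExps T W) := by
  rintro a b hab (ha | ha)
  · exact Or.inl (hT.isUpperSet hab ha)
  · exact Or.inr fun hb => ha ((Finsupp.support_mono hab).trans hb)

theorem mem_primeExps_of_add_mem (hT : IsSupportUpperSet T) {b c : σ →₀ ℕ}
    (hWc : W ⊆ c.support) (hc : c ∉ T) (hbc : b + c ∈ T) : b ∈ primeExps T W := by
  classical
  by_contra hb
  simp only [primeExps, Set.mem_union, Set.mem_ofPred_eq, not_or, not_not] at hb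
  refine hc (hT hbc ?_)
  rw [Finsupp.support_add_eq_union]
  exact Finset.union_subset (hb.2.trans hWc) le_rfl

theorem add_mem_of_notMem_coreExps (hT : IsSupportUpperSet T) {a u b w : σ →₀ ℕ} {q : ℕ}
    (ha : a ∉ coreExps T W) (hua : u ≤ a) (hq : q ≠ 0) (hWw : W ⊆ w.support)
    (hb : u + q • b ∈ T) : b + w ∈ T := by
  classical
  by_contra hbw
  refine ha ⟨b + w, hWw.trans (Finsupp.support_mono le_add_self), hbw, hT hb ?_⟩
  simp only [Finsupp.support_add_eq_union, Finsupp.support_smul_eq hq]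
  exact Finset.union_subset ((Finsupp.support_mono hua).trans Finset.subset_union_right)
    (Finset.subset_union_left.trans Finset.subset_union_left)

section

variable {K : Type*} [CommRing K] {I : Ideal (MvPolynomial σ K)} {𝔮 : Ideal (MvPolynomial σ K ⧸ I)}

theorem comap_eq_monomialIdeal_primeExps (hI : I = monomialIdeal K T) {V : Set σ}
    (h𝔮 : 𝔮 = Ideal.span ((fun i => Ideal.Quotient.mk I (X i)) '' V))
    (hW : ∀ i, i ∈ W ↔ Ideal.Quotient.mk I (X i) ∉ 𝔮) :
    𝔮.comap (Ideal.Quotient.mk I) = monomialIdeal K (primeExps T W) := by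
  apply le_antisymm
  · have hIQ : I ≤ monomialIdeal K (primeExps T W) :=
      hI ▸ Ideal.span_mono (Set.image_mono Set.subset_union_left)
    suffices 𝔮 ≤ (monomialIdeal K (primeExps T W)).map (Ideal.Quotient.mk I) from
      fun f hf => (Ideal.mem_quotient_iff_mem hIQ).1 (this hf)
    rw [h𝔮, Ideal.span_le]
    rintro _ ⟨i, hi, rfl⟩
    have hiW : i ∉ W := (hW i).not_left.2 (h𝔮 ▸ Ideal.subset_span ⟨i, hi, rfl⟩)
    refine Ideal.mem_map_of_mem _ (monomial_mem_monomialIdeal (Or.inr fun h => hiW (h ?_)))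
    simp
  · rw [monomialIdeal, Ideal.span_le]
    rintro _ ⟨a, ha | ha, rfl⟩ <;> simp only [SetLike.mem_coe, Ideal.mem_comap]
    · rw [Ideal.Quotient.eq_zero_iff_mem.2 (hI ▸ monomial_mem_monomialIdeal ha)]
      exact 𝔮.zero_mem
    · obtain ⟨i, hia, hiW⟩ := Finset.not_subset.1 ha
      have hdvd : X i ∣ (monomial a 1 : MvPolynomial σ K) :=
        X_dvd_monomial.2 (Or.inr (Finsupp.mem_support_iff.1 hia))
      exact Ideal.mem_of_dvd _ (map_dvd (Ideal.Quotient.mk I) hdvd) ((hW i).not_left.1 hiW)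

theorem sum_single_one_notMem_of_isPrime (h𝔮 : 𝔮.IsPrime) (hI : monomialIdeal K T ≤ I)
    (hW : ∀ i, i ∈ W ↔ Ideal.Quotient.mk I (X i) ∉ 𝔮) : ∑ i ∈ W, Finsupp.single i 1 ∉ T := by
  intro hWT
  have hprod : ∏ i ∈ W, Ideal.Quotient.mk I (X i) ∈ 𝔮 := by
    rw [← map_prod, Ideal.Quotient.eq_zero_iff_mem.2 (hI ?_)]
    · exact 𝔮.zero_mem
    · have hmem := monomial_mem_monomialIdeal (K := K) hWT
      rwa [monomial_sum_one] at hmem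
  obtain ⟨i, hiW, hi𝔮⟩ := h𝔮.prod_mem_iff.1 hprod
  exact (hW i).1 hiW hi𝔮

theorem map_monomialIdeal_frobeniusExps_le (hI : monomialIdeal K T ≤ I)
    (hW : ∀ i ∉ W, Ideal.Quotient.mk I (X i) ∈ 𝔮) (q : ℕ) :
    (monomialIdeal K (frobeniusExps T W q)).map (Ideal.Quotient.mk I) ≤ frobeniusPower 𝔮 q := by
  rw [Ideal.map_le_iff_le_comap, monomialIdeal, Ideal.span_le]
  rintro _ ⟨a, ha | ⟨i, hiW, hqa⟩, rfl⟩ <;> simp only [SetLike.mem_coe, Ideal.mem_comap]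
  · rw [Ideal.Quotient.eq_zero_iff_mem.2 (hI (monomial_mem_monomialIdeal ha))]
    exact Ideal.zero_mem _
  · have hdvd : X i ^ q ∣ (monomial a 1 : MvPolynomial σ K) := by
      rw [X_pow_eq_monomial]
      exact monomial_dvd_monomial.2 ⟨Or.inr (Finsupp.single_le_iff.2 hqa), one_dvd _⟩
    refine Ideal.mem_of_dvd _ (map_dvd (Ideal.Quotient.mk I) hdvd) ?_
    rw [map_pow]
    exact Ideal.subset_span ⟨_, hW i hiW, rfl⟩

theorem map_monomialIdeal_coreExps_le {p : ℕ} (hp : p ≠ 0) (hT : IsSupportUpperSet T)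
    (hI : I = monomialIdeal K T)
    (hQ : 𝔮.comap (Ideal.Quotient.mk I) = monomialIdeal K (primeExps T W)) (s : ℕ) :
    (monomialIdeal K (coreExps T W)).map (Ideal.Quotient.mk I) ≤ cartierContraction p s 𝔮 := by
  rw [Ideal.map_le_iff_le_comap, monomialIdeal, Ideal.span_le]
  rintro _ ⟨a, ⟨c, hWc, hcT, hcaT⟩, rfl⟩ ψ hψ
  set mk := Ideal.Quotient.mk I
  obtain ⟨g, hg⟩ := Ideal.Quotient.mk_surjective (ψ (mk (monomial a 1)))
  have hc : c ≤ p ^ s • c := Finsupp.le_def.2 fun i => by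
    simpa using Nat.le_mul_of_pos_left (c i) (Nat.pos_of_ne_zero (pow_ne_zero s hp))
  have hkill : mk (monomial c 1) ^ p ^ s * mk (monomial a 1) = 0 := by
    rw [← map_pow, ← map_mul, monomial_pow, one_pow, monomial_mul, one_mul,
      Ideal.Quotient.eq_zero_iff_mem, hI]
    exact monomial_mem_monomialIdeal (hT.isUpperSet (add_le_add hc le_rfl) hcaT)
  have hann : g * monomial c 1 ∈ monomialIdeal K T := by
    rw [← hI, ← Ideal.Quotient.eq_zero_iff_mem, map_mul, hg, mul_comm, ← hψ, hkill, map_zero]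
  rw [← hg, ← Ideal.mem_comap, hQ]
  exact mem_monomialIdeal_of_forall fun b hb =>
    mem_primeExps_of_add_mem hT hWc hcT (add_mem_of_mul_monomial_mem hT.isUpperSet hann hb)

theorem exists_isCartier_quotient_digitPart {p e : ℕ} [ExpChar K p] (hT : IsSupportUpperSet T)
    (hI : I = monomialIdeal K T) {a u : σ →₀ ℕ} (ha : a ∉ coreExps T W) (hua : u ≤ a)
    (hu : ∀ i, u i < p ^ e) (hq : p ^ e ≠ 0) {φ : K →+ K} (hφ : IsCartier p e φ) :
    ∃ ψ : MvPolynomial σ K ⧸ I →+ MvPolynomial σ K ⧸ I, IsCartier p e ψ ∧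
      ∀ f, ψ (Ideal.Quotient.mk I f) =
        Ideal.Quotient.mk I (monomial (∑ i ∈ W, Finsupp.single i 1) 1 * digitPart u hq φ f) :=
  ((isCartier_digitPart hu hq hφ).mulLeft_comp _).exists_quotient fun f hf => by
    rw [hI] at hf ⊢
    exact monomial_mul_digitPart_mem hT.isUpperSet hq φ
      (fun _ => add_mem_of_notMem_coreExps hT ha hua hq (Finsupp.support_sum_single_one W).ge) hf

end

theorem cartierContraction_le_map_monomialIdeal {K : Type*} [Field K] {p : ℕ} [ExpChar K p]
    {I : Ideal (MvPolynomial σ K)} {𝔮 : Ideal (MvPolynomial σ K ⧸ I)}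
    (hT : IsSupportUpperSet T) (hI : I = monomialIdeal K T)
    (hQ : 𝔮.comap (Ideal.Quotient.mk I) = monomialIdeal K (primeExps T W))
    (hface : ∑ i ∈ W, Finsupp.single i 1 ∉ T) (e : ℕ) :
    cartierContraction p e 𝔮 ≤
      (monomialIdeal K (frobeniusExps T W (p ^ e) ∪ coreExps T W)).map (Ideal.Quotient.mk I) := by
  intro z hz
  obtain ⟨f, rfl⟩ := Ideal.Quotient.mk_surjective z
  by_contra hf
  obtain ⟨a, haf, ha⟩ : ∃ a ∈ f.support, a ∉ frobeniusExps T W (p ^ e) ∪ coreExps T W := by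
    by_contra! h
    exact hf (Ideal.mem_map_of_mem _ (mem_monomialIdeal_of_forall h))
  rw [Set.mem_union, not_or] at ha
  have hq : 0 < p ^ e := pow_pos (expChar_pos K p) e
  obtain ⟨u, b, rfl, hu, hb⟩ := Finsupp.exists_eq_add_smul a hq
  have hbW : b.support ⊆ W := fun i hi => by
    by_contra hiW
    exact Finsupp.mem_support_iff.1 hi (hb i (not_le.1 fun h => ha.1 (Or.inr ⟨i, hiW, h⟩)))
  obtain ⟨φ, hφ, hφa⟩ := IsCartier.exists_eq_one p e (mem_support_iff.1 haf)
  obtain ⟨ψ, hψ, hψf⟩ :=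
    exists_isCartier_quotient_digitPart hT hI ha.2 le_self_add hu hq.ne' hφ
  set w := ∑ i ∈ W, Finsupp.single i 1
  have hmem : monomial w 1 * digitPart u hq.ne' φ f ∈ monomialIdeal K (primeExps T W) := by
    rw [← hQ, Ideal.mem_comap, ← hψf]
    exact hz ψ hψ
  have hwb : w + b ∈ (monomial w 1 * digitPart u hq.ne' φ f).support := by
    rw [mem_support_iff, coeff_monomial_mul, coeff_digitPart, hφa, one_mul]
    exact one_ne_zero
  have hwbW : (w + b).support ⊆ W := by
    classical
    rw [Finsupp.support_add_eq_union, Finsupp.support_sum_single_one]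
    exact Finset.union_subset le_rfl hbW
  rcases mem_of_mem_monomialIdeal hT.isUpperSet_primeExps hmem hwb with h | h
  · exact hface (hT h (hwbW.trans (Finsupp.support_sum_single_one W).ge))
  · exact h hwbW

end StanleyReisner

theorem IsSquarefreeMonomialIdeal.exists_eq_monomialIdeal {K : Type*} [Field K] {n : ℕ}
    {I : Ideal (MvPolynomial (Fin n) K)} (hI : IsSquarefreeMonomialIdeal I) :
    ∃ T, StanleyReisner.IsSupportUpperSet T ∧ I = monomialIdeal K T := by
  classical
  obtain ⟨A, rfl⟩ := hI
  refine ⟨{a | ∃ N ∈ A, N ⊆ a.support}, fun a b ⟨N, hN, hNa⟩ hab => ⟨N, hN, hNa.trans hab⟩,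
    le_antisymm ?_ ?_⟩
  · rw [Ideal.span_le]
    rintro _ ⟨N, hN, rfl⟩
    exact monomial_mem_monomialIdeal ⟨N, hN, (Finsupp.support_sum_single_one N).ge⟩
  · rw [monomialIdeal, Ideal.span_le]
    rintro _ ⟨a, ⟨N, hN, hNa⟩, rfl⟩
    have hle : ∑ i ∈ N, Finsupp.single i 1 ≤ a := Finsupp.le_def.2 fun j => by
      rw [Finsupp.sum_single_one_apply]
      split_ifs with hj
      · exact Nat.one_le_iff_ne_zero.2 (Finsupp.mem_support_iff.1 (hNa hj))
      · exact Nat.zero_le _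
    exact Ideal.mem_of_dvd _ (monomial_dvd_monomial.2 ⟨Or.inr hle, dvd_rfl⟩)
      (Ideal.subset_span ⟨N, hN, rfl⟩)

open StanleyReisner in
theorem cartierContraction_eq_frobeniusPower_sup_core_general {K : Type*} [Field K] {n : ℕ}
    (p : ℕ) (hp : p.Prime) [CharP K p]
    (I : Ideal (MvPolynomial (Fin n) K)) (hI : IsSquarefreeMonomialIdeal I)
    (𝔮 : Ideal (MvPolynomial (Fin n) K ⧸ I)) (h𝔮p : 𝔮.IsPrime)
    (h𝔮 : ∃ V : Set (Fin n),
      𝔮 = Ideal.span ((fun i => Ideal.Quotient.mk I (X i)) '' V))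
    (e : ℕ) :
    cartierContraction p e 𝔮 = frobeniusPower 𝔮 (p ^ e) ⊔ cartierCore p 𝔮 := by
  classical
  have := Fact.mk hp
  obtain ⟨T, hT, hIT⟩ := hI.exists_eq_monomialIdeal
  obtain ⟨V, hV⟩ := h𝔮
  set W := Finset.univ.filter fun i => Ideal.Quotient.mk I (X i) ∉ 𝔮
  have hW : ∀ i, i ∈ W ↔ Ideal.Quotient.mk I (X i) ∉ 𝔮 := by simp [W]
  have hQ := comap_eq_monomialIdeal_primeExps hIT hV hW
  refine le_antisymm ?_ (sup_le (frobeniusPower_le_cartierContraction p e 𝔮) (iInf_le _ e))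
  calc cartierContraction p e 𝔮
      ≤ (monomialIdeal K (frobeniusExps T W (p ^ e) ∪ coreExps T W)).map (Ideal.Quotient.mk I) :=
        cartierContraction_le_map_monomialIdeal hT hIT hQ
          (sum_single_one_notMem_of_isPrime h𝔮p hIT.ge hW) e
    _ ≤ frobeniusPower 𝔮 (p ^ e) ⊔ cartierCore p 𝔮 := by
        rw [monomialIdeal_union, Ideal.map_sup]
        exact sup_le_sup
          (map_monomialIdeal_frobeniusExps_le hIT.ge (fun i => (hW i).not_left.1) _)
          (le_iInf fun s => map_monomialIdeal_coreExps_le hp.ne_zero hT hIT hQ s)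

/-- In a Stanley–Reisner ring `R = S/I` over an `F`-finite field of
characteristic `p`, for a monomial prime ideal `𝔮` of `R`, `e ∈ ℕ` and `q = p^e`,
the Cartier contraction satisfies `𝔮_e = 𝔮^{[q]} + 𝒫(𝔮)`. -/
theorem cartierContraction_eq_frobeniusPower_sup_core {K : Type*} [Field K] {n : ℕ}
    (p : ℕ) (hp : p.Prime) [CharP K p] (hK : FFinite p K)
    (I : Ideal (MvPolynomial (Fin n) K)) (hI : IsSquarefreeMonomialIdeal I)
    (𝔮 : Ideal (MvPolynomial (Fin n) K ⧸ I)) (h𝔮p : 𝔮.IsPrime)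
    (h𝔮 : ∃ V : Set (Fin n),
      𝔮 = Ideal.span ((fun i => Ideal.Quotient.mk I (X i)) '' V))
    (e : ℕ) :
    cartierContraction p e 𝔮 = frobeniusPower 𝔮 (p ^ e) ⊔ cartierCore p 𝔮 :=
  cartierContraction_eq_frobeniusPower_sup_core_general p hp I hI 𝔮 h𝔮p h𝔮 e
end

section
/- Let S = K[x_1,...,x_n] with K a field of characteristic p, I a squarefree monomial ideal with minimal primes 𝔭_1,...,𝔭_l each generated by variables, and J a monomial ideal of S. Then for every e ∈ ℕ, ⋂_{i=1}^{l}(J^{[p^e]} + 𝔭_i) ⊆ J^{[p^e]} + I. -/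
open Filter

open MvPolynomial

/-- The Frobenius power of a monomial ideal is the monomial ideal of `q`-scaled exponents. -/
theorem frobeniusPower_monomial_span {K : Type*} [Field K] {n : ℕ}
    (p : ℕ) (hp : p.Prime) [CharP K p]
    (J : Ideal (MvPolynomial (Fin n) K)) (A : Set (Fin n →₀ ℕ))
    (hA : J = Ideal.span ((fun a => monomial a (1 : K)) '' A)) (e : ℕ) :
    frobeniusPower J (p ^ e)
      = Ideal.span ((fun a => monomial a (1 : K)) '' ((p ^ e • ·) '' A)) := by
  haveI : ExpChar (MvPolynomial (Fin n) K) p := ExpChar.prime hp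
  have h1 : frobeniusPower J (p ^ e)
      = Ideal.map (iterateFrobenius (MvPolynomial (Fin n) K) p e) J := rfl
  rw [h1, hA, Ideal.map_span, Set.image_image, Set.image_image]
  congr 1
  ext x
  constructor
  · rintro ⟨a, ha, rfl⟩
    exact ⟨a, ha, by simp [iterateFrobenius_def, monomial_pow, one_pow]⟩
  · rintro ⟨a, ha, rfl⟩
    exact ⟨a, ha, by simp [iterateFrobenius_def, monomial_pow, one_pow]⟩

/-- Let `I` be a squarefree monomial ideal of `S = K[x₁,…,xₙ]` with
minimal primes `𝔭₁, …, 𝔭ₗ`, each generated by variables, and let `J` be a monomial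
ideal of `S`. Then `⋂ᵢ (J^{[p^e]} + 𝔭ᵢ) ⊆ J^{[p^e]} + I` for every `e`. -/
theorem iInf_frobeniusPower_sup_minimal_primes_le {K : Type*} [Field K] {n l : ℕ}
    (p : ℕ) (hp : p.Prime) [CharP K p]
    (V : Fin l → Set (Fin n)) (𝔭 : Fin l → Ideal (MvPolynomial (Fin n) K))
    (h𝔭 : ∀ i, 𝔭 i = Ideal.span ((fun j => (X j : MvPolynomial (Fin n) K)) '' V i))
    (hmin : ∀ i j, i ≠ j → ¬ 𝔭 i ≤ 𝔭 j)
    (I : Ideal (MvPolynomial (Fin n) K)) (hI : I = ⨅ i, 𝔭 i)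
    (J : Ideal (MvPolynomial (Fin n) K))
    (hJ : ∃ A : Set (Fin n →₀ ℕ), J = Ideal.span ((fun a => monomial a (1 : K)) '' A))
    (e : ℕ) :
    (⨅ i, (frobeniusPower J (p ^ e) ⊔ 𝔭 i)) ≤ frobeniusPower J (p ^ e) ⊔ I := by
  obtain ⟨A, hA⟩ := hJ
  set Aq : Set (Fin n →₀ ℕ) := (p ^ e • ·) '' A with hAq
  have hFP : frobeniusPower J (p ^ e)
      = Ideal.span ((fun a => monomial a (1 : K)) '' Aq) :=
    frobeniusPower_monomial_span p hp J A hA e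
  -- express 𝔭 i as a monomial ideal
  have h𝔭' : ∀ i, 𝔭 i =
      Ideal.span ((fun a => monomial a (1 : K)) '' ((fun j => Finsupp.single j 1) '' V i)) := by
    intro i
    rw [h𝔭 i, Set.image_image]
    rfl
  classical
  intro f hf
  rw [Ideal.mem_iInf] at hf
  -- reduce to monomials of f
  rw [← support_sum_monomial_coeff f]
  refine Ideal.sum_mem _ fun a ha => ?_
  have key : monomial a (1 : K) ∈ frobeniusPower J (p ^ e) ⊔ I := by
    by_cases h : ∃ b ∈ Aq, b ≤ a
    · refine Ideal.mem_sup_left ?_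
      rw [hFP]
      rw [mem_ideal_span_monomial_image]
      intro xi hxi
      rw [support_monomial, if_neg one_ne_zero, Finset.mem_singleton] at hxi
      subst hxi; exact h
    · refine Ideal.mem_sup_right ?_
      rw [hI, Ideal.mem_iInf]
      intro i
      have hfi := hf i
      rw [hFP, h𝔭' i, (Ideal.span_union _ _).symm, ← Set.image_union,
        mem_ideal_span_monomial_image] at hfi
      obtain ⟨b, hb, hba⟩ := hfi a ha
      rcases hb with hb | hb
      · exact absurd ⟨b, hb, hba⟩ h
      · obtain ⟨j, hj, rfl⟩ := hb
        rw [h𝔭' i, mem_ideal_span_monomial_image]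
        intro xi hxi
        rw [support_monomial, if_neg one_ne_zero, Finset.mem_singleton] at hxi
        subst hxi
        exact ⟨Finsupp.single j 1, ⟨j, hj, rfl⟩, hba⟩
  have : monomial a (coeff a f) = C (coeff a f) * monomial a (1 : K) := by
    rw [C_mul_monomial, mul_one]
  rw [this]
  exact Ideal.mul_mem_left _ _ key
end
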